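/- arXiv:2509.01281 — 2 statements merged into one kernel-verified Lean document; each statement's English description precedes it below -/
import Mathlib

section
/- The ε-distinguishability ratio μ_{ρ,M}(ε) := (1/(2ε)) · min{ ‖ρ − σ‖_M : σ a density operator with ‖ρ − σ‖₁ ≥ 2ε } is a monotonically non-decreasing function of ε on (0, ε_ρ], where ε_ρ = (1/2)·max_σ ‖ρ − σ‖₁. -/
/-!
Shrinking a far state towards `ρ` proves monotonicity. If `σ` is at trace distance at least
`2ε'` from `ρ`, then `ρ - (ε/ε') • (ρ - σ)` is again a density operator, now at trace distance at
least `2ε`, and both `‖·‖₁` and `‖·‖_M` are positively homogeneous. Hence the minimum at level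
`ε` is at most `ε/ε'` times the minimum at level `ε'`, which is exactly `μ(ε) ≤ μ(ε')`.
The constraint set at level `ε' ≤ ε_ρ` is nonempty because the maximal trace distance from `ρ`
is attained: density operators form a compact set (they lie between `0` and `1` in the Loewner
order) and the trace norm `tr |A|` is continuous.
-/


open Matrix
open scoped ComplexOrder

namespace QSVQDH

variable {d : ℕ}

/-- Schatten 1-norm (trace norm). -/
noncomputable def trNorm (A : Matrix (Fin d) (Fin d) ℂ) : ℝ :=
  ((Matrix.posSemidef_conjTranspose_mul_self A).1.eigenvectorUnitary.1 *
    diagonal (((↑) : ℝ → ℂ) ∘ (Real.sqrt ·) ∘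
      (Matrix.posSemidef_conjTranspose_mul_self A).1.eigenvalues) *
    (star (Matrix.posSemidef_conjTranspose_mul_self A).1.eigenvectorUnitary :
      Matrix (Fin d) (Fin d) ℂ)).trace.re

/-- Schatten 2-norm (Hilbert–Schmidt norm). -/
noncomputable def hsNorm (A : Matrix (Fin d) (Fin d) ℂ) : ℝ :=
  Real.sqrt ((Aᴴ * A).trace.re)

/-- Operator norm. -/
noncomputable def opNorm (A : Matrix (Fin d) (Fin d) ℂ) : ℝ :=
  ‖Matrix.toEuclideanCLM (𝕜 := ℂ) A‖

/-- Density operator: positive semidefinite with unit trace. -/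
def IsDensity (ρ : Matrix (Fin d) (Fin d) ℂ) : Prop := ρ.PosSemidef ∧ ρ.trace = 1

/-- POVM element: 0 ≤ M ≤ I. -/
def IsPOVMElem (M : Matrix (Fin d) (Fin d) ℂ) : Prop := M.PosSemidef ∧ (1 - M).PosSemidef

/-- A measurement class of binary effects: contains 0, consists of POVM elements,
is convex, and is closed under M ↦ I − M. -/
def IsMClass (Mset : Set (Matrix (Fin d) (Fin d) ℂ)) : Prop :=
  0 ∈ Mset ∧ (∀ M ∈ Mset, IsPOVMElem M) ∧ Convex ℝ Mset ∧ (∀ M ∈ Mset, 1 - M ∈ Mset)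

/-- The M-seminorm ‖Δ‖_M = sup_{M ∈ Mset} (2 tr(MΔ) − tr Δ). -/
noncomputable def Mnorm (Mset : Set (Matrix (Fin d) (Fin d) ℂ))
    (Δ : Matrix (Fin d) (Fin d) ℂ) : ℝ :=
  sSup ((fun M => 2 * (M * Δ).trace.re - Δ.trace.re) '' Mset)

/-- The ε-distinguishability ratio μ_{ρ,M}(ε). -/
noncomputable def mu (Mset : Set (Matrix (Fin d) (Fin d) ℂ))
    (ρ : Matrix (Fin d) (Fin d) ℂ) (ε : ℝ) : ℝ :=
  (1 / (2 * ε)) *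
    sInf ((fun σ => Mnorm Mset (ρ - σ)) '' {σ | IsDensity σ ∧ 2 * ε ≤ trNorm (ρ - σ)})

/-- The ε-visibility γ_{V,M}(ε), where the subspace V is given by its
orthogonal projector P. -/
noncomputable def gamma (Mset : Set (Matrix (Fin d) (Fin d) ℂ))
    (P : Matrix (Fin d) (Fin d) ℂ) (ε : ℝ) : ℝ :=
  (1 / ε) * sSup ((fun Ω =>
      sInf ((fun p : Matrix (Fin d) (Fin d) ℂ × Matrix (Fin d) (Fin d) ℂ =>
          (Ω * (p.1 - p.2)).trace.re) ''
        {p | IsDensity p.1 ∧ P * p.1 = p.1 ∧ IsDensity p.2 ∧ (p.2 * P).trace.re ≤ 1 - ε}))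
    '' Mset)

/-- The ε-visibility in its minimax (minimum) form. -/
noncomputable def gammaMin (Mset : Set (Matrix (Fin d) (Fin d) ℂ))
    (P : Matrix (Fin d) (Fin d) ℂ) (ε : ℝ) : ℝ :=
  sInf ((fun p : Matrix (Fin d) (Fin d) ℂ × Matrix (Fin d) (Fin d) ℂ =>
      (1 / (2 * ε)) * Mnorm Mset (p.1 - p.2)) ''
    {p | IsDensity p.1 ∧ P * p.1 = p.1 ∧ IsDensity p.2 ∧ (p.2 * P).trace.re ≤ 1 - ε})

/-- μ_{ρ,M}(1), defined through perfectly distinguishable (orthogonal) counterparts. -/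
noncomputable def muone (Mset : Set (Matrix (Fin d) (Fin d) ℂ))
    (ρ : Matrix (Fin d) (Fin d) ℂ) : ℝ :=
  (1 / 2) * sInf ((fun σ => Mnorm Mset (ρ - σ)) '' {σ | IsDensity σ ∧ (ρ * σ).trace = 0})

/-- The distinguishability ratio μ̂_{ρ,M}. -/
noncomputable def muhat (Mset : Set (Matrix (Fin d) (Fin d) ℂ))
    (ρ : Matrix (Fin d) (Fin d) ℂ) : ℝ :=
  sInf ((fun σ => Mnorm Mset (ρ - σ) / trNorm (ρ - σ)) '' {σ | IsDensity σ ∧ σ ≠ ρ})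

open scoped Pointwise

section

open scoped MatrixOrder Matrix.Norms.L2Operator

lemma trNorm_eq_re_trace_cfcAbs (A : Matrix (Fin d) (Fin d) ℂ) :
    trNorm A = (CFC.abs A).trace.re := by
  have hX := Matrix.posSemidef_conjTranspose_mul_self A
  rw [CFC.abs, star_eq_conjTranspose, CFC.sqrt_eq_real_sqrt _ hX.nonneg, cfcₙ_eq_cfc,
    hX.1.cfc_eq]
  rfl

lemma continuous_trNorm : Continuous (trNorm : Matrix (Fin d) (Fin d) ℂ → ℝ) := by
  simp_rw [funext trNorm_eq_re_trace_cfcAbs]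
  exact Complex.continuous_re.comp (continuous_id.matrix_trace.comp CFC.continuous_abs)

lemma trNorm_smul_of_nonneg (A : Matrix (Fin d) (Fin d) ℂ) {t : ℝ} (ht : 0 ≤ t) :
    trNorm ((t : ℂ) • A) = t * trNorm A := by
  rw [trNorm_eq_re_trace_cfcAbs, trNorm_eq_re_trace_cfcAbs, CFC.abs_smul, trace_smul]
  simp [abs_of_nonneg ht]

lemma IsDensity.le_one {σ : Matrix (Fin d) (Fin d) ℂ} (hσ : IsDensity σ) : σ ≤ 1 := by
  have hσH := hσ.1.1
  have hsum : ∑ j, hσH.eigenvalues j = 1 := by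
    have := hσ.2
    rw [hσH.trace_eq_sum_eigenvalues] at this
    simpa using congrArg Complex.re this
  refine CFC.le_one (R := ℝ) (fun x hx => ?_) hσH.isSelfAdjoint
  obtain ⟨i, rfl⟩ := hσH.spectrum_real_eq_range_eigenvalues ▸ hx
  exact hsum ▸ Finset.single_le_sum (fun j _ => hσ.1.eigenvalues_nonneg j) (Finset.mem_univ i)

lemma isCompact_setOf_isDensity : IsCompact {σ : Matrix (Fin d) (Fin d) ℂ | IsDensity σ} := by
  have hIcc : IsCompact (Set.Icc (0 : Matrix (Fin d) (Fin d) ℂ) 1) := by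
    refine Metric.isCompact_of_isClosed_isBounded isClosed_Icc
      ((Metric.isBounded_closedBall (x := 0) (r := 1)).subset fun σ hσ => ?_)
    simpa using (CStarAlgebra.mem_Icc_iff_norm_le_one.1 hσ).2
  convert hIcc.inter_right (isClosed_eq continuous_id.matrix_trace continuous_const) using 1
  ext σ
  exact ⟨fun hσ => ⟨⟨hσ.1.nonneg, hσ.le_one⟩, hσ.2⟩,
    fun hσ => ⟨Matrix.nonneg_iff_posSemidef.1 hσ.1.1, hσ.2⟩⟩

lemma exists_isDensity_trNorm_sub_eq_sSup {ρ : Matrix (Fin d) (Fin d) ℂ} (hρ : IsDensity ρ) :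
    ∃ σ₀, IsDensity σ₀ ∧
      trNorm (ρ - σ₀) = sSup ((fun σ => trNorm (ρ - σ)) '' {σ | IsDensity σ}) :=
  (isCompact_setOf_isDensity.image (continuous_trNorm.comp (continuous_const.sub continuous_id)))
    |>.sSup_mem ⟨_, ρ, hρ, rfl⟩

lemma re_trace_mul_nonneg {n : Type*} [Fintype n] [DecidableEq n] {A B : Matrix n n ℂ}
    (hA : A.PosSemidef) (hB : B.PosSemidef) : 0 ≤ (A * B).trace.re := by
  have hs : IsSelfAdjoint (CFC.sqrt A) := (CFC.sqrt_nonneg A).isSelfAdjoint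
  have hA' : CFC.sqrt A * CFC.sqrt A = A := CFC.sqrt_mul_sqrt_self A hA.nonneg
  have h : (star (CFC.sqrt A) * B * CFC.sqrt A).PosSemidef :=
    (star_left_conjugate_nonneg hB.nonneg _).posSemidef
  rw [← hA', mul_assoc, trace_mul_comm]
  nth_rewrite 1 [← hs.star_eq]
  exact (Complex.nonneg_iff.1 h.trace_nonneg).1

end

lemma IsDensity.sub_smul_sub {ρ σ : Matrix (Fin d) (Fin d) ℂ} (hρ : IsDensity ρ)
    (hσ : IsDensity σ) {t : ℝ} (ht0 : 0 ≤ t) (ht1 : t ≤ 1) :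
    IsDensity (ρ - (t : ℂ) • (ρ - σ)) := by
  have h : ρ - (t : ℂ) • (ρ - σ) = ((1 - t : ℝ) : ℂ) • ρ + (t : ℂ) • σ := by
    rw [smul_sub, Complex.ofReal_sub, Complex.ofReal_one, sub_smul, one_smul]
    abel
  rw [h]
  refine ⟨(hρ.1.smul ?_).add (hσ.1.smul ?_), ?_⟩
  · exact_mod_cast sub_nonneg.2 ht1
  · exact_mod_cast ht0
  · rw [trace_add, trace_smul, trace_smul, hρ.2, hσ.2]
    push_cast
    ring

lemma IsPOVMElem.re_trace_mul_le_one {M ρ : Matrix (Fin d) (Fin d) ℂ} (hM : IsPOVMElem M)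
    (hρ : IsDensity ρ) : (M * ρ).trace.re ≤ 1 := by
  have h := re_trace_mul_nonneg hM.2 hρ.1
  rw [sub_mul, one_mul, trace_sub, hρ.2, Complex.sub_re, Complex.one_re] at h
  linarith

lemma Mnorm_smul_of_nonneg (Mset : Set (Matrix (Fin d) (Fin d) ℂ))
    (Δ : Matrix (Fin d) (Fin d) ℂ) {t : ℝ} (ht : 0 ≤ t) :
    Mnorm Mset ((t : ℂ) • Δ) = t * Mnorm Mset Δ := by
  have h : (fun M => 2 * (M * ((t : ℂ) • Δ)).trace.re - ((t : ℂ) • Δ).trace.re) =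
      (t • ·) ∘ fun M => 2 * (M * Δ).trace.re - Δ.trace.re := by
    funext M
    simp only [mul_smul_comm, trace_smul, smul_eq_mul, Complex.re_ofReal_mul, Function.comp_apply]
    ring
  rw [Mnorm, Mnorm, h, Set.image_comp, Set.image_smul, Real.sSup_smul_of_nonneg ht, smul_eq_mul]

lemma Mnorm_sub_nonneg {Mset : Set (Matrix (Fin d) (Fin d) ℂ)} (h0 : 0 ∈ Mset)
    (hPOVM : ∀ M ∈ Mset, IsPOVMElem M) {ρ σ : Matrix (Fin d) (Fin d) ℂ} (hρ : IsDensity ρ)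
    (hσ : IsDensity σ) : 0 ≤ Mnorm Mset (ρ - σ) := by
  have htr : (ρ - σ).trace = 0 := by rw [trace_sub, hρ.2, hσ.2, sub_self]
  refine le_csSup ⟨2, ?_⟩ ⟨0, h0, by simp [htr]⟩
  rintro _ ⟨M, hM, rfl⟩
  have h1 := (hPOVM M hM).re_trace_mul_le_one hρ
  have h2 := re_trace_mul_nonneg (hPOVM M hM).1 hσ.1
  simp only [htr, mul_sub, trace_sub, Complex.sub_re, Complex.zero_re]
  linarith

lemma smul_image_Mnorm_subset {Mset : Set (Matrix (Fin d) (Fin d) ℂ)}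
    {ρ : Matrix (Fin d) (Fin d) ℂ} (hρ : IsDensity ρ) {t : ℝ} (ht0 : 0 ≤ t) (ht1 : t ≤ 1)
    (δ : ℝ) :
    t • ((fun σ => Mnorm Mset (ρ - σ)) '' {σ | IsDensity σ ∧ 2 * δ ≤ trNorm (ρ - σ)}) ⊆
      (fun σ => Mnorm Mset (ρ - σ)) '' {σ | IsDensity σ ∧ 2 * (t * δ) ≤ trNorm (ρ - σ)} := by
  rintro _ ⟨_, ⟨σ, ⟨hσ, hfar⟩, rfl⟩, rfl⟩
  refine ⟨ρ - (t : ℂ) • (ρ - σ), ⟨hρ.sub_smul_sub hσ ht0 ht1, ?_⟩, ?_⟩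
  · rw [sub_sub_cancel, trNorm_smul_of_nonneg _ ht0]
    nlinarith
  · simp only [sub_sub_cancel, Mnorm_smul_of_nonneg _ _ ht0, smul_eq_mul]

/-- the ε-distinguishability ratio μ_{ρ,M}(ε) is monotonically
non-decreasing on (0, ε_ρ], where ε_ρ = (1/2)·max_σ ‖ρ − σ‖₁. -/
theorem mu_monotone (Mset : Set (Matrix (Fin d) (Fin d) ℂ)) (hM : IsMClass Mset)
    (ρ : Matrix (Fin d) (Fin d) ℂ) (hρ : IsDensity ρ) (ε ε' : ℝ)
    (hε : 0 < ε) (hεε' : ε ≤ ε')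
    (hε' : ε' ≤ (1 / 2) * sSup ((fun σ => trNorm (ρ - σ)) '' {σ | IsDensity σ})) :
    mu Mset ρ ε ≤ mu Mset ρ ε' := by
  have hε'pos : 0 < ε' := hε.trans_le hεε'
  have ht0 : 0 ≤ ε / ε' := div_nonneg hε.le hε'pos.le
  set f := fun σ => Mnorm Mset (ρ - σ)
  set S := {σ | IsDensity σ ∧ 2 * ε ≤ trNorm (ρ - σ)}
  set S' := {σ | IsDensity σ ∧ 2 * ε' ≤ trNorm (ρ - σ)}
  obtain ⟨σ₀, hσ₀, hσ₀max⟩ := exists_isDensity_trNorm_sub_eq_sSup hρ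
  -- `sInf ∅ = 0`: without a state this far from `ρ`, `μ(ε')` would be `0`
  have hne : (f '' S').Nonempty := ⟨_, σ₀, ⟨hσ₀, by linarith⟩, rfl⟩
  have hbdd : BddBelow (f '' S) := ⟨0, by
    rintro _ ⟨σ, hσ, rfl⟩
    exact Mnorm_sub_nonneg hM.1 hM.2.1 hρ hσ.1⟩
  have hsub : (ε / ε') • (f '' S') ⊆ f '' S := by
    simpa only [div_mul_cancel₀ _ hε'pos.ne'] using
      smul_image_Mnorm_subset hρ ht0 ((div_le_one hε'pos).2 hεε') ε'
  have hle : sInf (f '' S) ≤ ε / ε' * sInf (f '' S') := by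
    simpa only [Real.sInf_smul_of_nonneg ht0, smul_eq_mul] using
      csInf_le_csInf hbdd hne.smul_set hsub
  calc mu Mset ρ ε ≤ 1 / (2 * ε) * (ε / ε' * sInf (f '' S')) :=
        mul_le_mul_of_nonneg_left hle (by positivity)
    _ = 1 / (2 * ε') * sInf (f '' S') := by field_simp
    _ = mu Mset ρ ε' := rfl

end QSVQDH
end

section
/- If |Φ⟩ is a pure state in a finite-dimensional Hilbert space and Ω is a Hermitian operator with 0 ≤ Ω ≤ I, Ω|Φ⟩ = |Φ⟩, and max{tr(Ωσ) : σ density operator with tr(σΦ) = 0} ≤ 1 − g for some g > 0, then for every ε ∈ (0,1] and every density operator σ with tr(σΦ) ≤ 1 − ε, tr(Ω(Φ − σ)) ≥ ε·g, where Φ = |Φ⟩⟨Φ|. -/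
/-! With `Q = 1 - Φ`, the relations `ΩΦ = Φ = ΦΩ` give `QΩQ = Ω - Φ`, hence
`tr(Ωσ) = tr(σΦ) + tr(Ω QσQ)`. The compressed operator `QσQ` is positive, orthogonal to `Φ`
and has trace `1 - tr(σΦ) ≥ ε`; rescaled to a state, the gap bounds `tr(Ω QσQ)` by
`(1 - tr(σΦ))(1 - g)`, so `tr(Ω(Φ - σ)) ≥ (1 - tr(σΦ)) g ≥ ε g`. -/

open Matrix
open scoped ComplexOrder

namespace QSVQDH

variable {d : ℕ}

section Algebra

variable {R : Type*} [Ring R] {p : R}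

lemma one_sub_mul_mul_one_sub_eq_sub {a : R} (hp : IsIdempotentElem p) (hap : a * p = p)
    (hpa : p * a = p) : (1 - p) * a * (1 - p) = a - p :=
  calc (1 - p) * a * (1 - p) = a - p * a - a * p + p * a * p := by noncomm_ring
    _ = a - p := by rw [hpa, hap, hp.eq]; abel

lemma one_sub_mul_mul_one_sub_mul_eq_zero (hp : IsIdempotentElem p) (b : R) :
    (1 - p) * b * (1 - p) * p = 0 := by
  have h : (1 - p) * p = 0 := by rw [sub_mul, one_mul, hp.eq, sub_self]
  rw [mul_assoc, h, mul_zero]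

end Algebra

section Compression

variable {n R : Type*} [Fintype n] [CommRing R]

lemma mul_eq_self_of_mul_eq_self_of_isHermitian [StarRing R] {A P : Matrix n n R}
    (hA : A.IsHermitian) (hP : P.IsHermitian) (h : A * P = P) : P * A = P := by
  simpa [hA.eq, hP.eq] using congrArg conjTranspose h

lemma trace_mul_one_sub_mul_mul_one_sub [DecidableEq n] {P A : Matrix n n R}
    (hP : IsIdempotentElem P) (hAP : A * P = P) (hPA : P * A = P) (B : Matrix n n R) :
    (A * ((1 - P) * B * (1 - P))).trace = (A * B).trace - (B * P).trace :=
  calc (A * ((1 - P) * B * (1 - P))).trace = ((1 - P) * A * (1 - P) * B).trace := by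
        rw [← mul_assoc, trace_mul_comm]; simp only [mul_assoc]
    _ = (A * B).trace - (B * P).trace := by
        rw [one_sub_mul_mul_one_sub_eq_sub hP hAP hPA, sub_mul, trace_sub, trace_mul_comm P]

end Compression

lemma isDensity_inv_trace_smul {T : Matrix (Fin d) (Fin d) ℂ} (hT : T.PosSemidef)
    (htr : T.trace ≠ 0) : IsDensity (T.trace⁻¹ • T) :=
  ⟨hT.smul (inv_nonneg_of_nonneg hT.trace_nonneg),
    by rw [trace_smul, smul_eq_mul, inv_mul_cancel₀ htr]⟩

lemma re_trace_mul_le_of_gap {Φ Ω : Matrix (Fin d) (Fin d) ℂ} {g : ℝ}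
    (hgap : ∀ σ : Matrix (Fin d) (Fin d) ℂ, IsDensity σ → (σ * Φ).trace = 0 →
      (Ω * σ).trace.re ≤ 1 - g)
    {T : Matrix (Fin d) (Fin d) ℂ} (hT : T.PosSemidef) (hTΦ : T * Φ = 0) :
    (Ω * T).trace.re ≤ T.trace.re * (1 - g) := by
  by_cases htr : T.trace = 0
  · simp [hT.trace_eq_zero_iff.mp htr]
  have hnormalized := hgap _ (isDensity_inv_trace_smul hT htr)
    (by rw [smul_mul, hTΦ, smul_zero, trace_zero])
  have hreal : T.trace = (T.trace.re : ℂ) :=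
    Complex.eq_re_of_ofReal_le (r := 0) (by rw [Complex.ofReal_zero]; exact hT.trace_nonneg)
  have hpos : 0 < T.trace.re :=
    (Complex.nonneg_iff.mp hT.trace_nonneg).1.lt_of_ne fun h =>
      htr (by rw [hreal, ← h, Complex.ofReal_zero])
  rwa [Matrix.mul_smul, trace_smul, smul_eq_mul, hreal, ← Complex.ofReal_inv,
    Complex.re_ofReal_mul, inv_mul_le_iff₀ hpos] at hnormalized

/-- a strategy fixing a pure target state Φ with spectral gap g achieves
detection advantage ε·g against any state of fidelity at most 1 − ε. -/
theorem pure_state_universal_strategy (Φ Ω : Matrix (Fin d) (Fin d) ℂ)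
    (hΦ : IsDensity Φ) (hΦpure : Φ * Φ = Φ) (hΩ : IsPOVMElem Ω) (hfix : Ω * Φ = Φ)
    (g : ℝ) (hg : 0 < g)
    (hgap : ∀ σ : Matrix (Fin d) (Fin d) ℂ, IsDensity σ → (σ * Φ).trace = 0 →
      (Ω * σ).trace.re ≤ 1 - g) :
    ∀ ε : ℝ, ε ∈ Set.Ioc (0 : ℝ) 1 →
      ∀ σ : Matrix (Fin d) (Fin d) ℂ, IsDensity σ → (σ * Φ).trace.re ≤ 1 - ε →
        ε * g ≤ (Ω * (Φ - σ)).trace.re := by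
  rintro ε - σ hσ hfid
  have hΦΩ : Φ * Ω = Φ := mul_eq_self_of_mul_eq_self_of_isHermitian hΩ.1.1 hΦ.1.1 hfix
  have hT : ((1 - Φ) * σ * (1 - Φ)).PosSemidef := by
    have := hσ.1.mul_mul_conjTranspose_same (1 - Φ)
    rwa [conjTranspose_sub, conjTranspose_one, hΦ.1.1.eq] at this
  have hbound := re_trace_mul_le_of_gap hgap hT (one_sub_mul_mul_one_sub_mul_eq_zero hΦpure σ)
  have hΩT := trace_mul_one_sub_mul_mul_one_sub hΦpure hfix hΦΩ σ
  have htrT := trace_mul_one_sub_mul_mul_one_sub hΦpure (one_mul Φ) (mul_one Φ) σ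
  rw [one_mul, one_mul, hσ.2] at htrT
  have hadv : (Ω * (Φ - σ)).trace = 1 - (Ω * σ).trace := by
    rw [mul_sub, trace_sub, hfix, hΦ.2]
  rw [hΩT, htrT] at hbound
  rw [hadv]
  simp only [Complex.sub_re, Complex.one_re] at hbound ⊢
  nlinarith [mul_le_mul_of_nonneg_right hfid hg.le]

end QSVQDH
end
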